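/- Let P : [0,2] → ℝ be continuously differentiable, satisfying P'(t) = P(t)²/((1-t)²) for t ∈ [0,1), P'(t) = P(t)² for t ∈ [1,2], and P(2) = 1. Then no such P exists. (I.e., the Riccati ODE P' = P²/((1-t)²·𝟙_{[0,1)}(t) + 𝟙_{[1,2]}(t)), P(2)=1 has no continuous solution on [0,2].) -/

import Mathlib

open Set Filter Topology

/-!
On `[1, 2]` the equation is `P' = P²` with `P 2 = 1`, whose nonlinearity is Lipschitz on bounded
sets, so by uniqueness `P t = 1 / (3 - t)` there and `P 1 = 1/2 > 0`. On `[0, 1)` the equation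
`P' = P² / (1 - t)²` says that `1 / P t + 1 / (1 - t)` is constant wherever `P` does not vanish.
Near `t = 1` the function `P` stays positive by continuity, so `1 / P t` tends to `1 / P 1` while
`1 / (1 - t) → ∞`, contradicting the constancy: a solution of `P' = P² / (b - t)²` on `[a, b]`
must have `P b ≤ 0`.
-/

section

variable {P : ℝ → ℝ} {a b : ℝ}

theorem eqOn_inv_sub_of_hasDerivWithinAt_sq {c : ℝ} (hbc : b < c)
    (hP : ContinuousOn P (Icc a b))
    (hP' : ∀ t ∈ Ioc a b, HasDerivWithinAt P (P t ^ 2) (Iic t) t) (hb : P b = (c - b)⁻¹) :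
    EqOn P (fun t ↦ (c - t)⁻¹) (Icc a b) := by
  have hQ' (t : ℝ) (ht : t < c) : HasDerivAt (fun t ↦ (c - t)⁻¹) ((c - t)⁻¹ ^ 2) t := by
    refine (((hasDerivAt_id' t).const_sub c).inv (sub_ne_zero.2 ht.ne')).congr_deriv ?_
    rw [inv_pow, neg_neg, one_div]
  have hQ : ContinuousOn (fun t ↦ (c - t)⁻¹) (Icc a b) := fun t ht ↦
    (hQ' t (ht.2.trans_lt hbc)).continuousAt.continuousWithinAt
  set S := P '' Icc a b ∪ (fun t ↦ (c - t)⁻¹) '' Icc a b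
  have hS : IsCompact S :=
    (isCompact_Icc.image_of_continuousOn hP).union (isCompact_Icc.image_of_continuousOn hQ)
  have hsq : ContDiff ℝ 1 fun x : ℝ ↦ x ^ 2 := contDiff_id.pow 2
  obtain ⟨K, hlip⟩ :=
    (hsq.locallyLipschitz.locallyLipschitzOn (s := S)).exists_lipschitzOnWith_of_compact hS
  exact ODE_solution_unique_of_mem_Icc_left (fun _ _ ↦ hlip) hP hP'
    (fun t ht ↦ .inl ⟨t, Ioc_subset_Icc_self ht, rfl⟩) hQ
    (fun t ht ↦ (hQ' t (ht.2.trans_lt hbc)).hasDerivWithinAt)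
    (fun t ht ↦ .inr ⟨t, Ioc_subset_Icc_self ht, rfl⟩) hb

theorem inv_add_inv_sub_eq_of_hasDerivWithinAt
    (hP : ContinuousOn P (Icc a b))
    (hP' : ∀ t ∈ Ico a b, HasDerivWithinAt P (P t ^ 2 / (b - t) ^ 2) (Ici t) t)
    (hne : ∀ t ∈ Ico a b, P t ≠ 0) :
    ∀ t ∈ Ico a b, (P t)⁻¹ + (b - t)⁻¹ = (P a)⁻¹ + (b - a)⁻¹ := by
  intro t ht
  have hsub : Icc a t ⊆ Ico a b := Icc_subset_Ico_right ht.2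
  refine constant_of_has_deriv_right_zero (f := fun t ↦ (P t)⁻¹ + (b - t)⁻¹) ?_ ?_ t
    (right_mem_Icc.2 ht.1)
  · refine ((hP.mono (hsub.trans Ico_subset_Icc_self)).inv₀ fun x hx ↦ hne x (hsub hx)).add ?_
    exact (continuousOn_const.sub continuousOn_id).inv₀ fun x hx ↦ sub_ne_zero.2 (hsub hx).2.ne'
  · intro x hx
    have hx' : x ∈ Ico a b := hsub (Ico_subset_Icc_self hx)
    have hPx : P x ≠ 0 := hne x hx'
    have hxb : b - x ≠ 0 := sub_ne_zero.2 hx'.2.ne'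
    refine (((hP' x hx').inv hPx).add
      (((hasDerivWithinAt_id x _).const_sub b).inv hxb)).congr_deriv ?_
    simp only [id]
    field_simp
    ring

theorem nonpos_of_hasDerivWithinAt_sq_div_sq (hab : a < b)
    (hP : ContinuousOn P (Icc a b))
    (hP' : ∀ t ∈ Ico a b, HasDerivWithinAt P (P t ^ 2 / (b - t) ^ 2) (Ici t) t) :
    P b ≤ 0 := by
  by_contra! hb
  have hPb : Tendsto P (𝓝[≤] b) (𝓝 (P b)) := by
    rw [← nhdsWithin_Icc_eq_nhdsLE hab]
    exact hP b (right_mem_Icc.2 hab.le)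
  obtain ⟨l, hlb, hl⟩ := mem_nhdsLE_iff_exists_Icc_subset.1 (hPb.eventually (lt_mem_nhds hb))
  set a' := max a l
  have hconst := inv_add_inv_sub_eq_of_hasDerivWithinAt (a := a') (b := b)
    (hP.mono (Icc_subset_Icc_left (le_max_left _ _)))
    (fun t ht ↦ hP' t ⟨(le_max_left _ _).trans ht.1, ht.2⟩)
    (fun t ht ↦ (hl ⟨(le_max_right _ _).trans ht.1, ht.2.le⟩).ne')
  have hsing : Tendsto (fun t ↦ (b - t)⁻¹) (𝓝[<] b) atTop := by
    refine tendsto_inv_nhdsGT_zero.comp (tendsto_nhdsWithin_of_tendsto_nhds_of_eventually_within _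
      ?_ (eventually_nhdsWithin_of_forall fun t ht ↦ mem_Ioi.2 (sub_pos.2 ht)))
    simpa using ((continuous_sub_left b).tendsto b).mono_left nhdsWithin_le_nhds
  have hblowup := ((hPb.mono_left (nhdsWithin_mono _ Iio_subset_Iic_self)).inv₀ hb.ne').add_atTop
    hsing
  refine not_tendsto_const_atTop ((P a')⁻¹ + (b - a')⁻¹) (𝓝[<] b) (hblowup.congr' ?_)
  filter_upwards [Ioo_mem_nhdsLT (max_lt hab hlb)] with t ht using hconst t ⟨ht.1.le, ht.2⟩

end

theorem stmt_0 :
    ¬ ∃ P P' : ℝ → ℝ,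
      (∀ t ∈ Set.Icc (0:ℝ) 2, HasDerivWithinAt P (P' t) (Set.Icc (0:ℝ) 2) t) ∧
      ContinuousOn P' (Set.Icc (0:ℝ) 2) ∧
      (∀ t ∈ Set.Ico (0:ℝ) 1, P' t = (P t)^2 / (1 - t)^2) ∧
      (∀ t ∈ Set.Icc (1:ℝ) 2, P' t = (P t)^2) ∧
      P 2 = 1 := by
  rintro ⟨P, P', hd, -, hleft, hright, hP2⟩
  have hP : ContinuousOn P (Icc 0 2) := fun t ht ↦ (hd t ht).continuousWithinAt
  have hP1 : P 1 = (3 - 1)⁻¹ := by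
    refine eqOn_inv_sub_of_hasDerivWithinAt_sq (b := 2) (by norm_num)
      (hP.mono (Icc_subset_Icc_left zero_le_one)) (fun t ht ↦ ?_) (by norm_num [hP2])
      (left_mem_Icc.2 one_le_two)
    rw [← hright t (Ioc_subset_Icc_self ht)]
    have ht0 : 0 < t := zero_lt_one.trans ht.1
    exact (hd t ⟨ht0.le, ht.2⟩).mono_of_mem_nhdsWithin (Icc_mem_nhdsLE_of_mem ⟨ht0, ht.2⟩)
  have hP1_nonpos : P 1 ≤ 0 := by
    refine nonpos_of_hasDerivWithinAt_sq_div_sq one_pos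
      (hP.mono (Icc_subset_Icc_right one_le_two)) fun t ht ↦ ?_
    rw [← hleft t ht]
    have ht2 : t < 2 := ht.2.trans one_lt_two
    exact (hd t ⟨ht.1, ht2.le⟩).mono_of_mem_nhdsWithin (Icc_mem_nhdsGE_of_mem ⟨ht.1, ht2⟩)
  norm_num [hP1] at hP1_nonpos
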